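/- Let F be a symmetric fourth-order tensor on ℝⁿ with multilinear form F⁴ and convex score function S⁴(x) = F⁴(x,x,x,x). Then for all x,y ∈ ℝⁿ: 2 F⁴(x,x,y,y) ≤ F⁴(x,x,x,x) + F⁴(y,y,y,y). -/

import Mathlib

/-!
Convexity of the quartic `S(x) = F⁴(x,x,x,x)` makes its Hessian `12 F⁴(a,a,·,·)` positive
semidefinite: the midpoint inequality `2 S(a) ≤ S(a + t b) + S(a - t b)` reads
`0 ≤ 12 t² F⁴(a,a,b,b) + 2 t⁴ S(b)`, and dividing by `t²` and letting `t → 0` gives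
`0 ≤ F⁴(a,a,b,b)`. By the polarization identity
`S(u + v) + S(u - v) = 2 S(u) + 12 F⁴(u,u,v,v) + 2 S(v)`, taking `a = x + y`, `b = x - y` yields
`F⁴(x+y, x+y, x-y, x-y) = S(x) + S(y) - 2 F⁴(x,x,y,y)`, whence the claim.
-/

/-- A fourth-order tensor is symmetric if its entries are invariant under any
permutation of the indices. -/
def Sym4 {n : ℕ} (F : Fin n → Fin n → Fin n → Fin n → ℝ) : Prop :=
  ∀ (σ : Equiv.Perm (Fin 4)) (v : Fin 4 → Fin n),
    F (v (σ 0)) (v (σ 1)) (v (σ 2)) (v (σ 3)) = F (v 0) (v 1) (v 2) (v 3)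

/-- The multilinear form associated to a fourth-order tensor. -/
def mform4 {n : ℕ} (F : Fin n → Fin n → Fin n → Fin n → ℝ)
    (x y z t : Fin n → ℝ) : ℝ :=
  ∑ i, ∑ j, ∑ k, ∑ l, F i j k l * x i * y j * z k * t l

open Finset Filter Topology

lemma nonneg_of_forall_ne_zero_nonneg_add_sq_mul {c d : ℝ} (h : ∀ t ≠ 0, 0 ≤ c + t ^ 2 * d) :
    0 ≤ c := by
  have hlim : Tendsto (fun t : ℝ => c + t ^ 2 * d) (𝓝[≠] 0) (𝓝 c) := by
    have hcont : Continuous fun t : ℝ => c + t ^ 2 * d := by fun_prop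
    simpa using (hcont.tendsto 0).mono_left nhdsWithin_le_nhds
  exact ge_of_tendsto hlim (eventually_nhdsWithin_of_forall h)

section MultilinearForm

variable {n : ℕ} {F : Fin n → Fin n → Fin n → Fin n → ℝ}

lemma mform4_smul (a b c d : ℝ) (x y z w : Fin n → ℝ) :
    mform4 F (a • x) (b • y) (c • z) (d • w) = a * b * c * d * mform4 F x y z w := by
  simp only [mform4, Pi.smul_apply, smul_eq_mul, mul_sum]
  refine sum_congr rfl fun i _ => sum_congr rfl fun j _ =>
    sum_congr rfl fun k _ => sum_congr rfl fun l _ => ?_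
  ring

lemma mform4_diag_add_add_diag_sub (u v : Fin n → ℝ) :
    mform4 F (u + v) (u + v) (u + v) (u + v) + mform4 F (u - v) (u - v) (u - v) (u - v) =
      2 * mform4 F u u u u
        + 2 * (mform4 F u u v v + mform4 F u v u v + mform4 F u v v u
          + mform4 F v u u v + mform4 F v u v u + mform4 F v v u u)
        + 2 * mform4 F v v v v := by
  simp only [mform4, Pi.add_apply, Pi.sub_apply, mul_sum, ← sum_add_distrib]
  refine sum_congr rfl fun i _ => sum_congr rfl fun j _ =>
    sum_congr rfl fun k _ => sum_congr rfl fun l _ => ?_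
  ring

lemma Sym4.mform4_swap₁₂ (hF : Sym4 F) (x y z w : Fin n → ℝ) :
    mform4 F x y z w = mform4 F y x z w := by
  unfold mform4
  rw [sum_comm]
  refine sum_congr rfl fun j _ => sum_congr rfl fun i _ =>
    sum_congr rfl fun k _ => sum_congr rfl fun l _ => ?_
  have hswap : F j i k l = F i j k l := by
    simpa [Equiv.swap_apply_def] using hF (Equiv.swap 0 1) ![i, j, k, l]
  rw [hswap]
  ring

lemma Sym4.mform4_swap₂₃ (hF : Sym4 F) (x y z w : Fin n → ℝ) :
    mform4 F x y z w = mform4 F x z y w := by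
  unfold mform4
  refine sum_congr rfl fun i _ => ?_
  rw [sum_comm]
  refine sum_congr rfl fun k _ => sum_congr rfl fun j _ => sum_congr rfl fun l _ => ?_
  have hswap : F i k j l = F i j k l := by
    simpa [Equiv.swap_apply_def] using hF (Equiv.swap 1 2) ![i, j, k, l]
  rw [hswap]
  ring

lemma Sym4.mform4_swap₃₄ (hF : Sym4 F) (x y z w : Fin n → ℝ) :
    mform4 F x y z w = mform4 F x y w z := by
  unfold mform4
  refine sum_congr rfl fun i _ => sum_congr rfl fun j _ => ?_
  rw [sum_comm]
  refine sum_congr rfl fun l _ => sum_congr rfl fun k _ => ?_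
  have hswap : F i j l k = F i j k l := by
    simpa [Equiv.swap_apply_def] using hF (Equiv.swap 2 3) ![i, j, k, l]
  rw [hswap]
  ring

lemma Sym4.mform4_polarization (hF : Sym4 F) (u v : Fin n → ℝ) :
    mform4 F (u + v) (u + v) (u + v) (u + v) + mform4 F (u - v) (u - v) (u - v) (u - v) =
      2 * mform4 F u u u u + 12 * mform4 F u u v v + 2 * mform4 F v v v v := by
  have huvuv : mform4 F u v u v = mform4 F u u v v := hF.mform4_swap₂₃ u v u v
  have huvvu : mform4 F u v v u = mform4 F u u v v := by
    rw [hF.mform4_swap₃₄, huvuv]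
  have hvuuv : mform4 F v u u v = mform4 F u u v v := by
    rw [hF.mform4_swap₁₂, huvuv]
  have hvuvu : mform4 F v u v u = mform4 F u u v v := by
    rw [hF.mform4_swap₁₂, huvvu]
  have hvvuu : mform4 F v v u u = mform4 F u u v v := by
    rw [hF.mform4_swap₂₃, hvuvu]
  rw [mform4_diag_add_add_diag_sub, huvuv, huvvu, hvuuv, hvuvu, hvvuu]
  ring

lemma Sym4.mform4_nonneg_of_convexOn (hF : Sym4 F) (hconv : ConvexOn ℝ Set.univ (fun x : Fin n → ℝ => mform4 F x x x x))
    (a b : Fin n → ℝ) : 0 ≤ mform4 F a a b b := by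
  refine nonneg_of_forall_ne_zero_nonneg_add_sq_mul (d := mform4 F b b b b / 6) fun t ht => ?_
  have hmid : (1 / 2 : ℝ) • (a + t • b) + (1 / 2 : ℝ) • (a - t • b) = a := by module
  have hconvex := hconv.2 (Set.mem_univ (a + t • b)) (Set.mem_univ (a - t • b))
    (by norm_num : (0 : ℝ) ≤ 1 / 2) (by norm_num : (0 : ℝ) ≤ 1 / 2) (by norm_num)
  simp only [hmid, smul_eq_mul] at hconvex
  have hpol := hF.mform4_polarization a (t • b)
  have hscale : mform4 F a a (t • b) (t • b) = t ^ 2 * mform4 F a a b b := by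
    simpa [sq] using mform4_smul (F := F) 1 1 t t a a b b
  rw [hscale, mform4_smul] at hpol
  have hquad : 0 ≤ t ^ 2 * (mform4 F a a b b + t ^ 2 * (mform4 F b b b b / 6)) := by
    linarith
  exact nonneg_of_mul_nonneg_right hquad (by positivity)

end MultilinearForm

/-- If the score function of a symmetric fourth-order tensor is convex, then
`2 F⁴(x,x,y,y) ≤ F⁴(x,x,x,x) + F⁴(y,y,y,y)`. -/
theorem stmt_6 {n : ℕ} (F : Fin n → Fin n → Fin n → Fin n → ℝ) (hF : Sym4 F)
    (hconv : ConvexOn ℝ Set.univ (fun x : Fin n → ℝ => mform4 F x x x x)) :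
    ∀ x y : Fin n → ℝ,
      2 * mform4 F x x y y ≤ mform4 F x x x x + mform4 F y y y y := by
  intro x y
  have hnonneg := hF.mform4_nonneg_of_convexOn hconv (x + y) (x - y)
  have hpol_xy := hF.mform4_polarization x y
  have hpol_sum_diff := hF.mform4_polarization (x + y) (x - y)
  have hsum : x + y + (x - y) = (2 : ℝ) • x := by module
  have hdiff : x + y - (x - y) = (2 : ℝ) • y := by module
  rw [hsum, hdiff, mform4_smul, mform4_smul] at hpol_sum_diff
  linarith
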